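/- arXiv:2503.14474 — 4 statements merged into one kernel-verified Lean document; each statement's English description precedes it below -/
import Mathlib

section
/- Let r ≥ 2, let 1 ≤ k ≤ ⌊r/2⌋, let (x_1,…,x_r) ∈ X_{r,k}, set x_0 = 0, and let [0,I] be the initial segment. If I ≤ k − 1, then every segment has length at most I + 1. -/
open Finset

/-- A finite hypergraph: a finite vertex set (of naturals) together with a
finite set of edges, each edge being a subset of the vertex set. -/
structure FinHypergraph where
  verts : Finset ℕ
  edges : Finset (Finset ℕ)
  edge_sub : ∀ e ∈ edges, e ⊆ verts

namespace FinHypergraph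

/-- `H` is `r`-uniform if every edge has exactly `r` vertices. -/
def IsUniform (r : ℕ) (H : FinHypergraph) : Prop := ∀ e ∈ H.edges, e.card = r

/-- `H` contains a copy of `F` (i.e. `F` is a subgraph of `H` after an injective
relabelling of the vertices of `F`). -/
def ContainsCopy (F H : FinHypergraph) : Prop :=
  ∃ f : ℕ → ℕ, Set.InjOn f ↑F.verts ∧ (∀ v ∈ F.verts, f v ∈ H.verts) ∧
    ∀ e ∈ F.edges, e.image f ∈ H.edges

/-- `H` is `𝓕`-free: it contains no member of `𝓕` as a subgraph. -/
def Free (𝓕 : Set FinHypergraph) (H : FinHypergraph) : Prop := ∀ F ∈ 𝓕, ¬ F.ContainsCopy H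

/-- `f` is a homomorphism from `F` to `H`: the image of every edge of `F` is an
edge of `H`. -/
def IsHom (f : ℕ → ℕ) (F H : FinHypergraph) : Prop :=
  (∀ v ∈ F.verts, f v ∈ H.verts) ∧ ∀ e ∈ F.edges, e.image f ∈ H.edges

/-- `H` is `𝓕`-hom-free: no member of `𝓕` admits a homomorphism to `H`. -/
def HomFree (𝓕 : Set FinHypergraph) (H : FinHypergraph) : Prop :=
  ∀ F ∈ 𝓕, ∀ f : ℕ → ℕ, ¬ IsHom f F H

/-- The degree of a vertex: the number of edges containing it. -/
def degree (H : FinHypergraph) (v : ℕ) : ℕ := (H.edges.filter (fun e => v ∈ e)).card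

/-- `H` is `r`-partite: the vertices can be coloured with `r` colours so that every
edge contains exactly one vertex of each colour. -/
def Partite (r : ℕ) (H : FinHypergraph) : Prop :=
  ∃ f : ℕ → Fin r, ∀ e ∈ H.edges, ∀ c : Fin r, (e.filter (fun v => f v = c)).card = 1

/-- `H` and `G` are isomorphic hypergraphs. -/
def Isomorphic (H G : FinHypergraph) : Prop :=
  ∃ f : ℕ → ℕ, Set.BijOn f ↑H.verts ↑G.verts ∧ H.edges.image (Finset.image f) = G.edges

end FinHypergraph

/-- The Turán number `ex(n, 𝓕)`: the maximum number of edges in an `𝓕`-free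
`r`-uniform hypergraph on `n` vertices. -/
noncomputable def exNum (r n : ℕ) (𝓕 : Set FinHypergraph) : ℕ :=
  sSup {m : ℕ | ∃ H : FinHypergraph, H.verts = Finset.range n ∧ H.IsUniform r ∧
    H.Free 𝓕 ∧ H.edges.card = m}

/-- The Turán density `π(𝓕) = lim_{n → ∞} ex(n, 𝓕) / (n choose r)`. -/
noncomputable def turanDensity (r : ℕ) (𝓕 : Set FinHypergraph) : ℝ :=
  Filter.lim (Filter.map (fun n : ℕ => (exNum r n 𝓕 : ℝ) / (n.choose r : ℝ)) Filter.atTop)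

/-- The three edges of the `(r-i,i)`-tent on vertex set `{1, …, 2r-1}`. -/
def tentEdges (r i : ℕ) : Finset (Finset ℕ) :=
  {Finset.Icc 1 r,
   Finset.Icc 1 i ∪ Finset.Icc (r + 1) (2 * r - i - 1) ∪ {2 * r - 1},
   Finset.Icc (i + 1) r ∪ Finset.Icc (2 * r - i) (2 * r - 1)}

/-- The `(r-i,i)`-tent `Δ_{(r-i,i)}`. -/
def tent (r i : ℕ) : FinHypergraph where
  verts := Finset.Icc 1 (2 * r - 1) ∪ (tentEdges r i).biUnion id
  edges := tentEdges r i
  edge_sub := fun e he =>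
    (Finset.subset_biUnion_of_mem id he).trans Finset.subset_union_right

/-- The family `𝓕_{r,k} = {Δ_{(r-i,i)} : 1 ≤ i ≤ k}`. -/
def tentFamily (r k : ℕ) : Set FinHypergraph := {H | ∃ i, 1 ≤ i ∧ i ≤ k ∧ H = tent r i}

/-- The Lagrangian of a hypergraph: the maximum of `∑_{e ∈ E} ∏_{v ∈ e} w v` over
nonnegative vertex weightings summing to `1`. -/
noncomputable def lagrangian (H : FinHypergraph) : ℝ :=
  sSup {s : ℝ | ∃ w : ℕ → ℝ, (∀ v, 0 ≤ w v) ∧ (∑ v ∈ H.verts, w v) = 1 ∧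
    s = ∑ e ∈ H.edges, ∏ v ∈ e, w v}

/-- The blowup density `b(H) = r! · L(H)`. -/
noncomputable def blowupDensity (r : ℕ) (H : FinHypergraph) : ℝ :=
  (r.factorial : ℝ) * lagrangian H

/-- Membership in the set `X_{r,k}`: `0 < x 1 ≤ x 2 ≤ ⋯ ≤ x r = 1`, and
`x i + x j ≤ x (i+j)` whenever `1 ≤ i ≤ k` and `i ≤ j ≤ r - i`. -/
def memX (r k : ℕ) (x : ℕ → ℝ) : Prop :=
  0 < x 1 ∧ (∀ i, 1 ≤ i → i < r → x i ≤ x (i + 1)) ∧ x r = 1 ∧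
    ∀ i j, 1 ≤ i → i ≤ k → i ≤ j → i + j ≤ r → x i + x j ≤ x (i + j)

/-- The interval `[L, R]` is uniform for `x`: `x i = x L + (i - L) * x 1` on it. -/
def UniformIntv (x : ℕ → ℝ) (L R : ℕ) : Prop :=
  ∀ i, L ≤ i → i ≤ R → x i = x L + ((i - L : ℕ) : ℝ) * x 1

/-- `[L, R]` is a segment: a uniform interval (inside `[0, r]`) that is not properly
contained in any other uniform interval. -/
def IsSegment (r : ℕ) (x : ℕ → ℝ) (L R : ℕ) : Prop :=
  L ≤ R ∧ R ≤ r ∧ UniformIntv x L R ∧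
    ∀ L' R', L' ≤ L → R ≤ R' → R' ≤ r → UniformIntv x L' R' → L' = L ∧ R' = R

/-- Shannon entropy (base 2) of a finitely supported distribution `p` on `s`. -/
noncomputable def ent {α : Type*} (s : Finset α) (p : α → ℝ) : ℝ :=
  ∑ a ∈ s, -(p a * Real.logb 2 (p a))

/-- Entropy of the pushforward of `p` along `g` (the entropy of `g(X)`). -/
noncomputable def pushEnt {α β : Type*} [DecidableEq β] (s : Finset α) (p : α → ℝ)
    (g : α → β) : ℝ :=
  ent (s.image g) (fun b => ∑ a ∈ s.filter (fun a => g a = b), p a)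

/-- All tuples in `V(H)^r`. -/
def tupleSpace (r : ℕ) (H : FinHypergraph) : Finset (Fin r → ℕ) :=
  Fintype.piFinset fun _ : Fin r => H.verts

/-- The joint entropy `H(X_1, …, X_r)` of a random tuple with distribution `p`. -/
noncomputable def jointEnt (r : ℕ) (H : FinHypergraph) (p : (Fin r → ℕ) → ℝ) : ℝ :=
  ent (tupleSpace r H) p

/-- The entropy `H(X_i, X_{i+1}, …, X_r)` of the suffix starting at position `i`
(1-indexed) of a random tuple with distribution `p`. -/
noncomputable def suffixEnt (r : ℕ) (H : FinHypergraph) (p : (Fin r → ℕ) → ℝ) (i : ℕ) : ℝ :=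
  pushEnt (tupleSpace r H) p (fun t (j : Fin r) => if i - 1 ≤ (j : ℕ) then t j else 0)

/-- The entropy `H(X_{j+1})` of the single coordinate `j` (0-indexed). -/
noncomputable def coordEnt (r : ℕ) (H : FinHypergraph) (p : (Fin r → ℕ) → ℝ) (j : Fin r) : ℝ :=
  pushEnt (tupleSpace r H) p (fun t => t j)

/-- `p` is the distribution of a random edge with uniform ordering on `H`:
nonnegative, total mass one, supported on tuples whose value set is an edge, and
exchangeable (invariant under permutations of the coordinates). -/
def IsRandomEdge (r : ℕ) (H : FinHypergraph) (p : (Fin r → ℕ) → ℝ) : Prop :=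
  (∀ t, 0 ≤ p t) ∧
  (∑ t ∈ tupleSpace r H, p t = 1) ∧
  (∀ t, p t ≠ 0 → Finset.image t Finset.univ ∈ H.edges) ∧
  (∀ σ : Equiv.Perm (Fin r), ∀ t, p (t ∘ σ) = p t)

/-- Every pair of distinct vertices lies in a common edge. -/
def TwoCovered (H : FinHypergraph) : Prop :=
  ∀ u ∈ H.verts, ∀ v ∈ H.verts, u ≠ v → ∃ e ∈ H.edges, u ∈ e ∧ v ∈ e

/-- `G` is a blowup of `G0`. -/
def IsBlowup (G0 G : FinHypergraph) : Prop :=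
  ∃ B : ℕ → Finset ℕ,
    (∀ v ∈ G0.verts, (B v).Nonempty) ∧
    (∀ u ∈ G0.verts, ∀ v ∈ G0.verts, u ≠ v → Disjoint (B u) (B v)) ∧
    G.verts = G0.verts.biUnion B ∧
    ∀ e : Finset ℕ, e ∈ G.edges ↔
      ∃ e0 ∈ G0.edges, e ⊆ e0.biUnion B ∧ ∀ v ∈ e0, (e ∩ B v).card = 1

/-- `G` is symmetrised: a blowup of a 2-covered `r`-uniform hypergraph. -/
def Symmetrised (r : ℕ) (G : FinHypergraph) : Prop :=
  ∃ G0 : FinHypergraph, G0.IsUniform r ∧ TwoCovered G0 ∧ IsBlowup G0 G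

/-- The family `𝓣_{r,k}` of `r`-uniform hypergraphs with exactly three edges
`A, B, C` such that `A ⊆ B ∪ C`, `(B ∩ C) \ A ≠ ∅` and `|A ∩ B| ≥ r - k`. -/
def TFamily (r k : ℕ) : Set FinHypergraph :=
  {H | H.IsUniform r ∧ ∃ A B C : Finset ℕ,
    H.verts = A ∪ B ∪ C ∧ H.edges = {A, B, C} ∧
    A ≠ B ∧ A ≠ C ∧ B ≠ C ∧
    A ⊆ B ∪ C ∧ ((B ∩ C) \ A).Nonempty ∧ r - k ≤ (A ∩ B).card}

/-- `H` is `Lset`-intersecting: any two distinct edges intersect in a number of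
vertices belonging to `Lset`. -/
def LIntersecting (Lset : Set ℕ) (H : FinHypergraph) : Prop :=
  ∀ e ∈ H.edges, ∀ e' ∈ H.edges, e ≠ e' → (e ∩ e').card ∈ Lset

/-- `H` is a `λ`-tent for the partition `lam = (λ_1, …, λ_m)` of `r`: it has
`m + 1` edges `e 0, e 1, …, e m`, each of size `r`, with `|e 0 ∩ e i| = λ_i`,
the sets `e 0 ∩ e 1, …, e 0 ∩ e m` partitioning `e 0`, and a vertex `v` with
`e i ∩ e j = {v}` for all `1 ≤ i < j ≤ m`. -/
def IsGeneralTent (r : ℕ) (lam : List ℕ) (H : FinHypergraph) : Prop :=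
  ∃ e : ℕ → Finset ℕ,
    H.verts = (Finset.range (lam.length + 1)).biUnion e ∧
    H.edges = (Finset.range (lam.length + 1)).image e ∧
    H.edges.card = lam.length + 1 ∧
    (∀ i ∈ Finset.range (lam.length + 1), (e i).card = r) ∧
    (∀ i, 1 ≤ i → i ≤ lam.length → (e 0 ∩ e i).card = lam.getD (i - 1) 0) ∧
    e 0 = (Finset.Icc 1 lam.length).biUnion (fun i => e 0 ∩ e i) ∧
    (∀ i j, 1 ≤ i → i < j → j ≤ lam.length → Disjoint (e 0 ∩ e i) (e 0 ∩ e j)) ∧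
    (∃ v : ℕ, ∀ i j, 1 ≤ i → i < j → j ≤ lam.length → e i ∩ e j = {v})

/-- The balanced complete `r`-partite `r`-uniform hypergraph `T^r(n)` on the vertex
set `{0, …, n-1}`, with parts given by residues modulo `r`: the edges are exactly
the `r`-subsets whose vertices have pairwise distinct residues mod `r`, i.e. those
meeting each part in exactly one vertex. -/
def turanGraph (r n : ℕ) : FinHypergraph where
  verts := Finset.range n
  edges := (Finset.powersetCard r (Finset.range n)).filter
    (fun e => ∀ u ∈ e, ∀ v ∈ e, u ≠ v → u % r ≠ v % r)
  edge_sub := by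
    intro e he
    simp only [Finset.mem_filter, Finset.mem_powersetCard] at he
    exact he.1.1

/-!
Since `x 0 = 0`, the initial segment `[0, I]` is uniform with `x m = m * x 1`, and `I ≥ 1`.
Maximality of `[0, I]` together with `x 1 + x I ≤ x (I + 1)` gives the strict gap
`(I + 1) * x 1 < x (I + 1)`. A segment `[L, R]` with `R - L ≥ I + 1` either starts inside
`[0, I]`, and then `[0, R]` is uniform, contradicting maximality; or it starts at some
`L ≥ I + 1`, and then, as `I + 1 ≤ k`, `x (L + I + 1) ≥ x L + x (I + 1) > x L + (I + 1) * x 1`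
breaks uniformity on `[L, L + I + 1]`.
-/

namespace UniformIntv

variable {x : ℕ → ℝ} {L M R : ℕ}

theorem mono (h : UniformIntv x L R) {L' R' : ℕ} (hL : L ≤ L') (hR : R' ≤ R) :
    UniformIntv x L' R' := by
  intro i hL'i hiR'
  rw [h i (hL.trans hL'i) (hiR'.trans hR), h L' hL (hL'i.trans (hiR'.trans hR)),
    Nat.cast_sub (hL.trans hL'i), Nat.cast_sub hL, Nat.cast_sub hL'i]
  ring

theorem append (h₁ : UniformIntv x L M) (h₂ : UniformIntv x M R) (hLM : L ≤ M) :
    UniformIntv x L R := by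
  intro i hLi hiR
  rcases le_total i M with hiM | hMi
  · exact h₁ i hLi hiM
  · rw [h₂ i hMi hiR, h₁ M hLM le_rfl, Nat.cast_sub hMi, Nat.cast_sub hLM, Nat.cast_sub hLi]
    ring

theorem self_succ (h : x (R + 1) = x R + x 1) : UniformIntv x R (R + 1) := by
  intro i hRi hiR
  rcases (by omega : i = R ∨ i = R + 1) with rfl | rfl <;> simp [h]

end UniformIntv

namespace IsSegment

variable {r : ℕ} {x : ℕ → ℝ} {L R I : ℕ}

theorem succ_ne (h : IsSegment r x L R) (hR : R + 1 ≤ r) : x (R + 1) ≠ x R + x 1 := by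
  intro heq
  have := h.2.2.2 L (R + 1) le_rfl R.le_succ hR
    (h.2.2.1.append (UniformIntv.self_succ heq) h.1)
  omega

theorem eq_mul_of_zero (h : IsSegment r x 0 I) (h0 : x 0 = 0) {m : ℕ} (hm : m ≤ I) :
    x m = m * x 1 := by
  simpa [h0] using h.2.2.1 m m.zero_le hm

theorem one_le_of_zero (h : IsSegment r x 0 I) (h0 : x 0 = 0) (hr : 1 ≤ r) : 1 ≤ I := by
  by_contra! hI
  obtain rfl : I = 0 := by omega
  exact h.succ_ne hr (by simp [h0])

end IsSegment

namespace memX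

variable {r k : ℕ} {x : ℕ → ℝ}

theorem succ_mul_lt_of_isSegment (hx : memX r k x) (h0 : x 0 = 0) {I : ℕ}
    (hI : IsSegment r x 0 I) (hIk : I + 1 ≤ k) (hIr : I + 1 ≤ r) :
    (I + 1 : ℝ) * x 1 < x (I + 1) := by
  have hI1 : 1 ≤ I := hI.one_le_of_zero h0 (by omega)
  have hsuper : x 1 + x I ≤ x (I + 1) := by
    simpa [add_comm] using hx.2.2.2 1 I le_rfl (by omega) hI1 (by omega)
  have hxI := hI.eq_mul_of_zero h0 le_rfl
  have hne := hI.succ_ne hIr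
  rw [hxI] at hsuper hne
  exact lt_of_le_of_ne (by linarith) (by contrapose! hne; linarith)

theorem lt_add_of_uniformIntv (hx : memX r k x) {L R J : ℕ} (hu : UniformIntv x L R)
    (hRr : R ≤ r) (hJL : J ≤ L) (hJ : 1 ≤ J) (hJk : J ≤ k) (hgap : J * x 1 < x J) :
    R < L + J := by
  by_contra! hLJR
  have hsuper := hx.2.2.2 J L hJ hJk hJL (by omega)
  have hunif := hu (L + J) (by omega) hLJR
  rw [add_comm J L] at hsuper
  rw [Nat.add_sub_cancel_left] at hunif
  linarith

end memX

theorem segment_length_le_general (r k : ℕ)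
    (x : ℕ → ℝ) (hx : memX r k x) (h0 : x 0 = 0)
    (I : ℕ) (hI : IsSegment r x 0 I) (hIk : I + 1 ≤ k) :
    ∀ L R, IsSegment r x L R → R - L + 1 ≤ I + 1 := by
  rintro L R ⟨hLR, hRr, hu, -⟩
  by_contra! hlong
  rcases le_or_gt L I with hLI | hIL
  · have h0R : UniformIntv x 0 R := (hI.2.2.1.mono le_rfl hLI).append hu L.zero_le
    have := (hI.2.2.2 0 R le_rfl (by omega) hRr h0R).2
    omega
  · have hgap := hx.succ_mul_lt_of_isSegment h0 hI hIk (by omega)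
    have := hx.lt_add_of_uniformIntv hu hRr hIL I.succ_pos hIk (by exact_mod_cast hgap)
    omega

/-- **Lemma 3.4.** Let `(x_1, …, x_r) ∈ X_{r,k}` with `x_0 = 0` and initial segment
`[0, I]`. If `I ≤ k − 1`, then every segment has length at most `I + 1`. -/
theorem segment_length_le (r k : ℕ) (hr : 2 ≤ r) (hk1 : 1 ≤ k) (hk2 : k ≤ r / 2)
    (x : ℕ → ℝ) (hx : memX r k x) (h0 : x 0 = 0)
    (I : ℕ) (hI : IsSegment r x 0 I) (hIk : I + 1 ≤ k) :
    ∀ L R, IsSegment r x L R → R - L + 1 ≤ I + 1 :=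
  segment_length_le_general r k x hx h0 I hI hIk
end

section
/- Let r ≥ 2, let 1 ≤ k ≤ ⌊r/2⌋, let (x_1,…,x_r) ∈ X_{r,k}, and set x_0 = 0. Let [L_1,R_1] and [L_2,R_2] be segments with L_1 < L_2, and let i, j be positive integers with i ∈ [L_1,R_1], i + j ∈ [L_2,R_2], R_2 − R_1 > j, and min{R_1 + 1, j} ≤ k. Then x_i + x_j < x_{i+j}. -/
open Finset

/-!
Maximality of the segment `[L₁, R₁]` below `R₂ ≤ r` makes the step out of it strictly
superadditive, `x_{R₁} + x_1 < x_{R₁+1}`, while the `X_{r,k}` inequality gives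
`x_{R₁+1} + x_j ≤ x_{R₁+1+j}`. The moves `i ↦ R₁` and `i + j ↦ R₁ + 1 + j` stay inside a
segment, where `x` has slope `x_1`, so the two shifts cancel and the strict inequality
transfers to `x_i + x_j < x_{i+j}`.
-/

namespace UniformIntv

variable {x : ℕ → ℝ} {L R : ℕ}

theorem eq_add_of_le (h : UniformIntv x L R) {a b : ℕ} (hLa : L ≤ a) (hab : a ≤ b)
    (hbR : b ≤ R) : x b = x a + ((b - a : ℕ) : ℝ) * x 1 := by
  rw [h a hLa (hab.trans hbR), h b (hLa.trans hab) hbR, show b - L = (b - a) + (a - L) by omega]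
  push_cast
  ring

theorem extend_succ (h : UniformIntv x L R) (hLR : L ≤ R) (hstep : x (R + 1) = x R + x 1) :
    UniformIntv x L (R + 1) := by
  intro m hLm hmR
  rcases Nat.lt_or_ge m (R + 1) with hm | hm
  · exact h m hLm (by omega)
  · obtain rfl : m = R + 1 := by omega
    rw [hstep, h R hLR le_rfl, show R + 1 - L = (R - L) + 1 by omega]
    push_cast
    ring

end UniformIntv

theorem IsSegment.add_lt_succ {r : ℕ} {x : ℕ → ℝ} {L R : ℕ} (h : IsSegment r x L R)
    (hRr : R < r) (hle : x R + x 1 ≤ x (R + 1)) : x R + x 1 < x (R + 1) := by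
  obtain ⟨hLR, -, hU, hmax⟩ := h
  refine lt_of_le_of_ne hle fun heq => ?_
  have := hmax L (R + 1) le_rfl R.le_succ hRr (hU.extend_succ hLR heq.symm)
  omega

theorem memX.add_le_of_min_le {r k : ℕ} {x : ℕ → ℝ} (hx : memX r k x) {a b : ℕ}
    (ha : 1 ≤ a) (hb : 1 ≤ b) (hmin : min a b ≤ k) (hab : a + b ≤ r) :
    x a + x b ≤ x (a + b) := by
  rcases le_total a b with h | h
  · exact hx.2.2.2 a b ha (by omega) h hab
  · simpa only [add_comm] using hx.2.2.2 b a hb (by omega) h (by omega)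

theorem strict_ineq_of_segments_right_general (r k : ℕ) (hk1 : 1 ≤ k)
    (x : ℕ → ℝ) (hx : memX r k x)
    (L1 R1 L2 R2 : ℕ) (hseg1 : IsSegment r x L1 R1) (hseg2 : IsSegment r x L2 R2)
    (i j : ℕ) (hi : 1 ≤ i) (hj : 1 ≤ j)
    (hiL : L1 ≤ i) (hiR : i ≤ R1) (hijL : L2 ≤ i + j)
    (hgap : R1 + j < R2) (hmin : min (R1 + 1) j ≤ k) :
    x i + x j < x (i + j) := by
  obtain ⟨-, hR2r, hU2, -⟩ := hseg2
  have hstep : x R1 + x 1 < x (R1 + 1) :=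
    hseg1.add_lt_succ (by omega) (by
      simpa only [add_comm] using hx.add_le_of_min_le le_rfl (hi.trans hiR) (by omega) (by omega))
  have hjump : x (R1 + 1) + x j ≤ x (R1 + 1 + j) :=
    hx.add_le_of_min_le (by omega) hj hmin (by omega)
  have hleft : x R1 = x i + ((R1 - i : ℕ) : ℝ) * x 1 :=
    hseg1.2.2.1.eq_add_of_le hiL hiR le_rfl
  have hright : x (R1 + 1 + j) = x (i + j) + ((R1 - i + 1 : ℕ) : ℝ) * x 1 := by
    rw [hU2.eq_add_of_le hijL (by omega) (by omega),
      show R1 + 1 + j - (i + j) = R1 - i + 1 by omega]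
  push_cast at hright
  linarith

/-- **Lemma 3.6 (moving right).** Let `(x_1, …, x_r) ∈ X_{r,k}` with `x_0 = 0`, and let
`[L_1, R_1]`, `[L_2, R_2]` be segments with `L_1 < L_2`. If `i ∈ [L_1, R_1]` and
`i + j ∈ [L_2, R_2]` with `R_2 − R_1 > j` and `min (R_1 + 1) j ≤ k`, then
`x_i + x_j < x_{i+j}`. -/
theorem strict_ineq_of_segments_right (r k : ℕ) (hr : 2 ≤ r) (hk1 : 1 ≤ k) (hk2 : k ≤ r / 2)
    (x : ℕ → ℝ) (hx : memX r k x) (h0 : x 0 = 0)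
    (L1 R1 L2 R2 : ℕ) (hseg1 : IsSegment r x L1 R1) (hseg2 : IsSegment r x L2 R2)
    (hLL : L1 < L2) (i j : ℕ) (hi : 1 ≤ i) (hj : 1 ≤ j)
    (hiL : L1 ≤ i) (hiR : i ≤ R1) (hijL : L2 ≤ i + j) (hijR : i + j ≤ R2)
    (hgap : R1 + j < R2) (hmin : min (R1 + 1) j ≤ k) :
    x i + x j < x (i + j) :=
  strict_ineq_of_segments_right_general r k hk1 x hx L1 R1 L2 R2 hseg1 hseg2 i j hi hj hiL hiR hijL
    hgap hmin
end

section
/- For every integer r ≥ 2 and every integer k with 1 ≤ k < ⌊r/e⌋ (where e is the base of the natural logarithm), there exists (x_1,…,x_r) ∈ X_{r,k} such that ∏_{i=1}^r x_i > r!/r^r. -/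
open Finset

/-!
Perturb the point `x_i = i / r`, whose product is `r!/r^r`, to
`x_i = (1 - δ) i / r + δ [i > k]`. The jump after `k` keeps `x` in `X_{r,k}`, and the
product gets multiplied by `(1 - δ)^k ∏_{k < i ≤ r} (1 + δ (r/i - 1))`, whose derivative at
`δ = 0` is `S - k` with `S = ∑_{k < i ≤ r} (r/i - 1)`. Since `e (k + 1) ≤ r`, comparison with
`log` gives `∑_{k < i ≤ r} 1/i > 1`, i.e. `S > k`, so a small `δ > 0` works.
-/
theorem Finset.one_add_sum_le_prod_one_add {ι R : Type*} [CommSemiring R] [PartialOrder R]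
    [IsOrderedRing R] (s : Finset ι) {f : ι → R} (hf : ∀ i ∈ s, 0 ≤ f i) :
    1 + ∑ i ∈ s, f i ≤ ∏ i ∈ s, (1 + f i) := by
  classical
  induction s using Finset.induction_on with
  | empty => simp
  | insert a s ha ih =>
    have hfa := hf a (mem_insert_self a s)
    have hfs : ∀ i ∈ s, 0 ≤ f i := fun i hi => hf i (mem_insert_of_mem hi)
    rw [sum_insert ha, prod_insert ha]
    calc 1 + (f a + ∑ i ∈ s, f i) ≤ 1 + (f a + ∑ i ∈ s, f i) + f a * ∑ i ∈ s, f i :=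
          le_add_of_nonneg_right (mul_nonneg hfa (sum_nonneg hfs))
      _ = (1 + f a) * (1 + ∑ i ∈ s, f i) := by ring
      _ ≤ (1 + f a) * ∏ i ∈ s, (1 + f i) :=
          mul_le_mul_of_nonneg_left (ih hfs) (add_nonneg zero_le_one hfa)

theorem Real.log_sub_log_le_sum_Ioc_inv {k r : ℕ} (hkr : k ≤ r) :
    Real.log (r + 1) - Real.log (k + 1) ≤ ∑ i ∈ Ioc k r, (i : ℝ)⁻¹ := by
  have hstep : ∀ i ∈ Ico (k + 1) (r + 1),
      Real.log ((i + 1 : ℕ) : ℝ) - Real.log i ≤ (i : ℝ)⁻¹ := by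
    intro i hi
    have hi : (0 : ℝ) < i := Nat.cast_pos.2 (by have := (mem_Ico.1 hi).1; omega)
    rw [← Real.log_div (by positivity) hi.ne']
    calc _ ≤ ((i + 1 : ℕ) : ℝ) / i - 1 := Real.log_le_sub_one_of_pos (by positivity)
      _ = (i : ℝ)⁻¹ := by push_cast; field_simp; ring
  calc Real.log (r + 1) - Real.log (k + 1)
      = ∑ i ∈ Ico (k + 1) (r + 1), (Real.log ((i + 1 : ℕ) : ℝ) - Real.log i) := by
        rw [sum_Ico_sub (fun i : ℕ => Real.log i) (by omega)]
        push_cast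
        rfl
    _ ≤ ∑ i ∈ Ico (k + 1) (r + 1), (i : ℝ)⁻¹ := sum_le_sum hstep
    _ = ∑ i ∈ Ioc k r, (i : ℝ)⁻¹ := by
        congr 1
        ext i
        simp only [mem_Ico, mem_Ioc]
        omega

theorem one_lt_sum_Ioc_inv {k r : ℕ} (h : Real.exp 1 * (k + 1) ≤ r) :
    1 < ∑ i ∈ Ioc k r, (i : ℝ)⁻¹ := by
  have hkr : k ≤ r := by
    have : (k : ℝ) ≤ r := by nlinarith [Real.add_one_le_exp 1]
    exact_mod_cast this
  refine lt_of_lt_of_le ?_ (Real.log_sub_log_le_sum_Ioc_inv hkr)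
  rw [lt_sub_iff_add_lt', Real.lt_log_iff_exp_lt (by positivity), Real.exp_add,
    Real.exp_log (by positivity)]
  linarith

theorem exists_one_lt_one_sub_pow_mul_prod_one_add {ι : Type*} (s : Finset ι) {a : ι → ℝ}
    (ha : ∀ i ∈ s, 0 ≤ a i) {k : ℕ} (hk : (k : ℝ) < ∑ i ∈ s, a i) :
    ∃ δ : ℝ, 0 < δ ∧ δ < 1 ∧ 1 < (1 - δ) ^ k * ∏ i ∈ s, (1 + δ * a i) := by
  set S := ∑ i ∈ s, a i
  have hS : 0 < S := (Nat.cast_nonneg k).trans_lt hk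
  -- this `δ` makes the second order loss `k δ² S` at most half the first order gain `δ (S - k)`
  set δ := (S - k) / (2 * (k + 1) * S) with hδ
  have hk0 : (0 : ℝ) ≤ k := Nat.cast_nonneg k
  have hδ0 : 0 < δ := div_pos (by linarith) (by positivity)
  have hδS : 2 * (k + 1) * δ * S = S - k := by rw [hδ]; field_simp
  have hδ1 : δ < 1 := by nlinarith [mul_nonneg (mul_nonneg hk0 hδ0.le) hS.le]
  refine ⟨δ, hδ0, hδ1, ?_⟩
  calc 1 < (1 - k * δ) * (1 + δ * S) := by nlinarith [mul_pos (mul_pos hδ0 hδ0) hS]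
    _ ≤ (1 - δ) ^ k * ∏ i ∈ s, (1 + δ * a i) := by
      apply mul_le_mul
      · simpa [sub_eq_add_neg] using one_add_mul_le_pow (a := -δ) (by linarith) k
      · rw [mul_sum]
        exact one_add_sum_le_prod_one_add s fun i hi => mul_nonneg hδ0.le (ha i hi)
      · positivity
      · exact pow_nonneg (by linarith) k

noncomputable def linearWithJump (r k : ℕ) (δ : ℝ) (i : ℕ) : ℝ :=
  (1 - δ) * i / r + if k < i then δ else 0

theorem memX_linearWithJump {r k : ℕ} {δ : ℝ} (hkr : k < r) (hδ0 : 0 ≤ δ) (hδ1 : δ < 1) :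
    memX r k (linearWithJump r k δ) := by
  have hr : (0 : ℝ) < r := by exact_mod_cast (Nat.zero_le k).trans_lt hkr
  have hslope : 0 ≤ (1 - δ) / r := div_nonneg (by linarith) hr.le
  refine ⟨?_, fun i _ _ => ?_, ?_, fun i j _ hik _ _ => ?_⟩ <;> simp only [linearWithJump]
  · refine add_pos_of_pos_of_nonneg (div_pos (by simpa using hδ1) hr) ?_
    split_ifs <;> linarith
  · have : (1 - δ) * i / r ≤ (1 - δ) * (i + 1 : ℕ) / r := by
      rw [mul_div_right_comm, mul_div_right_comm _ ((i + 1 : ℕ) : ℝ)]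
      exact mul_le_mul_of_nonneg_left (by simp) hslope
    split_ifs <;> first | omega | linarith
  · simp only [hkr, if_true]
    field_simp
    ring
  · have hlin : (1 - δ) * (i + j : ℕ) / r = (1 - δ) * i / r + (1 - δ) * j / r := by
      push_cast
      ring
    rw [if_neg (by omega), hlin]
    split_ifs <;> first | omega | linarith

theorem prod_Icc_linearWithJump {r k : ℕ} (δ : ℝ) (hkr : k ≤ r) :
    ∏ i ∈ Icc 1 r, linearWithJump r k δ i =
      r.factorial / r ^ r * ((1 - δ) ^ k * ∏ i ∈ Ioc k r, (1 + δ * (r / i - 1))) := by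
  have hfactor : ∀ i ∈ Icc 1 r, linearWithJump r k δ i =
      i / r * (if k < i then 1 + δ * (r / i - 1) else 1 - δ) := by
    intro i hi
    have hi0 : (0 : ℝ) < i := Nat.cast_pos.2 (mem_Icc.1 hi).1
    have hr0 : (0 : ℝ) < r := Nat.cast_pos.2 (by have := mem_Icc.1 hi; omega)
    unfold linearWithJump
    split_ifs <;> field_simp <;> ring
  have hfactorial : ∏ i ∈ Icc 1 r, (i : ℝ) = r.factorial := by
    rw [← Nat.cast_prod, ← Ico_add_one_right_eq_Icc, prod_Ico_id_eq_factorial]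
  rw [prod_congr rfl hfactor, prod_mul_distrib, prod_div_distrib, hfactorial, prod_const,
    Nat.card_Icc, Nat.add_sub_cancel, show Icc 1 r = Ioc 0 r from rfl,
    ← prod_Ioc_consecutive _ (Nat.zero_le k) hkr]
  congr 2
  · rw [prod_congr rfl fun i hi => if_neg (not_lt.2 (mem_Ioc.1 hi).2), prod_const, Nat.card_Ioc,
      Nat.sub_zero]
  · exact prod_congr rfl fun i hi => if_pos (mem_Ioc.1 hi).1

theorem exists_large_prod_general (r k : ℕ) (hk : k < ⌊(r : ℝ) / Real.exp 1⌋₊) :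
    ∃ x : ℕ → ℝ, memX r k x ∧
      (r.factorial : ℝ) / (r : ℝ) ^ r < ∏ i ∈ Finset.Icc 1 r, x i := by
  have hek : Real.exp 1 * (k + 1) ≤ r := by
    have := (Nat.le_floor_iff (by positivity)).1 hk
    push_cast at this
    rwa [le_div_iff₀ (Real.exp_pos 1), mul_comm] at this
  have hkr : k < r := by
    have : (k : ℝ) < r := by nlinarith [Real.add_one_le_exp 1]
    exact_mod_cast this
  have hr : (0 : ℝ) < r := by exact_mod_cast (Nat.zero_le k).trans_lt hkr
  have hS : (k : ℝ) < ∑ i ∈ Ioc k r, ((r : ℝ) / i - 1) := by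
    simp only [div_eq_mul_inv, sum_sub_distrib, ← mul_sum, sum_const, Nat.card_Ioc,
      nsmul_eq_mul, mul_one, Nat.cast_sub hkr.le]
    nlinarith [one_lt_sum_Ioc_inv hek]
  have hnonneg : ∀ i ∈ Ioc k r, 0 ≤ (r : ℝ) / i - 1 := by
    intro i hi
    have hi := mem_Ioc.1 hi
    rw [sub_nonneg, one_le_div (Nat.cast_pos.2 (by omega))]
    exact_mod_cast hi.2
  obtain ⟨δ, hδ0, hδ1, hδ⟩ := exists_one_lt_one_sub_pow_mul_prod_one_add (Ioc k r) hnonneg hS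
  refine ⟨linearWithJump r k δ, memX_linearWithJump hkr hδ0.le hδ1, ?_⟩
  rw [prod_Icc_linearWithJump δ hkr.le]
  exact lt_mul_of_one_lt_right (div_pos (by positivity) (pow_pos hr r)) hδ

/-- **Lemma 3.10 (the value `⌈r/e⌉` is essentially optimal).** For every `r ≥ 2` and
every `k` with `1 ≤ k < ⌊r/e⌋`, there exists `(x_1, …, x_r) ∈ X_{r,k}` with
`∏_{i=1}^r x_i > r!/r^r`. -/
theorem exists_large_prod (r k : ℕ) (hr : 2 ≤ r) (hk1 : 1 ≤ k)
    (hk : k < ⌊(r : ℝ) / Real.exp 1⌋₊) :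
    ∃ x : ℕ → ℝ, memX r k x ∧
      (r.factorial : ℝ) / (r : ℝ) ^ r < ∏ i ∈ Finset.Icc 1 r, x i :=
  exists_large_prod_general r k hk
end

section
/- For every integer r ≥ 2 and every family F of r-uniform hypergraphs, the Turán density satisfies π(F) = sup{b(H) : H is a finite F-hom-free r-uniform hypergraph}. -/
open Finset

/-!
The ratios `ex(n, 𝓕) / (n choose r)` are nonincreasing from `n = r` on (average the number of edges
of an extremal graph on `n + 1` vertices over its `n`-vertex induced subgraphs), so they converge to
`π(𝓕)`.

`b(H) ≤ π(𝓕)` for every `𝓕`-hom-free `H`: replacing each vertex `u` of `H` by `⌊w u * n⌋` clones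
gives an `𝓕`-free hypergraph, because a copy of `F` followed by the projection onto `H` is a
homomorphism `F → H`; it has about `r! · ∑_e ∏_{u ∈ e} w u · (n choose r)` edges.

`π(𝓕) ≤ s := sup b(H)`: an `𝓕`-hom-free hypergraph on `m` vertices has at most `s m^r / r!`
edges, so in a hypergraph with `(s + ε) (n choose r)` edges a proportion `ε / 2` of the `m`-sets
span a pattern that is not `𝓕`-hom-free, and one such pattern `P` occurs on a fixed proportion of
all `m`-sets. Erdős's box theorem then gives large disjoint sets `B u`, `u ∈ V(P)`, every
transversal of which spans a copy of `P`, and these contain a copy of any `F` with a homomorphism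
to `P`.
-/

open Filter Topology

namespace FinHypergraph

theorem ext {H G : FinHypergraph} (hv : H.verts = G.verts) (he : H.edges = G.edges) : H = G := by
  cases H; cases G; simp_all

variable {r n : ℕ} {𝓕 : Set FinHypergraph} {F G H : FinHypergraph} {f g : ℕ → ℕ}

theorem ContainsCopy.exists_isHom (h : F.ContainsCopy G) : ∃ f, IsHom f F G :=
  let ⟨f, _, hv, he⟩ := h
  ⟨f, hv, he⟩

theorem IsHom.comp (hg : IsHom g G H) (hf : IsHom f F G) : IsHom (g ∘ f) F H :=
  ⟨fun v hv => hg.1 _ (hf.1 v hv), fun e he => by rw [← image_image]; exact hg.2 _ (hf.2 e he)⟩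

theorem IsHom.injOn_of_mem_edges (hf : IsHom f F H) (hF : F.IsUniform r) (hH : H.IsUniform r)
    {e : Finset ℕ} (he : e ∈ F.edges) : Set.InjOn f e :=
  injOn_of_card_image_eq (by rw [hH _ (hf.2 e he), hF e he])

theorem ContainsCopy.trans (hFG : F.ContainsCopy G) (hGH : G.ContainsCopy H) :
    F.ContainsCopy H := by
  obtain ⟨f, hf_inj, hf_verts, hf_edges⟩ := hFG
  obtain ⟨g, hg_inj, hg_verts, hg_edges⟩ := hGH
  refine ⟨g ∘ f, hg_inj.comp hf_inj fun v hv => hf_verts v hv,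
    fun v hv => hg_verts _ (hf_verts v hv), fun e he => ?_⟩
  rw [← image_image]
  exact hg_edges _ (hf_edges e he)

theorem Free.of_containsCopy (hH : H.Free 𝓕) (hGH : G.ContainsCopy H) : G.Free 𝓕 :=
  fun F hF hFG => hH F hF (hFG.trans hGH)

theorem HomFree.free_of_isHom (hH : H.HomFree 𝓕) (hg : IsHom g G H) : G.Free 𝓕 :=
  fun F hF hFG =>
    let ⟨_, hf⟩ := hFG.exists_isHom
    hH F hF _ (hg.comp hf)

theorem IsUniform.card_edges_le (hu : H.IsUniform r) : #H.edges ≤ (#H.verts).choose r := by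
  rw [← card_powersetCard]
  exact card_le_card fun e he => mem_powersetCard.2 ⟨H.edge_sub e he, hu e he⟩

end FinHypergraph

open FinHypergraph

section Enumeration

variable {T : Finset ℕ}

noncomputable def enum (T : Finset ℕ) : ℕ → ℕ := Nat.nth (· ∈ T)

def rank (T : Finset ℕ) : ℕ → ℕ := Nat.count (· ∈ T)

theorem finite_ofPred_mem (T : Finset ℕ) : (Set.ofPred (· ∈ T)).Finite := T.finite_toSet

theorem toFinset_finite_ofPred_mem (T : Finset ℕ) : (finite_ofPred_mem T).toFinset = T := by
  ext; simp [Set.ofPred]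

theorem enum_mem {i : ℕ} (hi : i < #T) : enum T i ∈ T :=
  Nat.nth_mem_of_lt_card (finite_ofPred_mem T) (by rwa [toFinset_finite_ofPred_mem])

theorem rank_lt_card {x : ℕ} (hx : x ∈ T) : rank T x < #T := by
  have := Nat.count_lt_card (finite_ofPred_mem T) hx
  rwa [toFinset_finite_ofPred_mem] at this

theorem enum_rank {x : ℕ} (hx : x ∈ T) : enum T (rank T x) = x := Nat.nth_count hx

theorem rank_enum {i : ℕ} (hi : i < #T) : rank T (enum T i) = i :=
  Nat.count_nth_of_lt_card_finite (finite_ofPred_mem T) (by rwa [toFinset_finite_ofPred_mem])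

theorem injOn_enum : Set.InjOn (enum T) (range #T) := fun i hi j hj h => by
  rw [← rank_enum (mem_range.1 hi), h, rank_enum (mem_range.1 hj)]

theorem image_enum_range : (range #T).image (enum T) = T :=
  eq_of_subset_of_card_le
    (fun _ hx => by obtain ⟨i, hi, rfl⟩ := mem_image.1 hx; exact enum_mem (mem_range.1 hi))
    (by rw [card_image_of_injOn injOn_enum, card_range])

end Enumeration

theorem exists_injOn_mapsTo_of_card_le {α β : Type*} [Nonempty β] {s : Finset α} {t : Finset β}
    (h : #s ≤ #t) : ∃ f : α → β, Set.InjOn f s ∧ Set.MapsTo f s t := by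
  classical
  obtain ⟨ι⟩ := Function.Embedding.nonempty_of_card_le (α := s) (β := t) (by simpa using h)
  refine ⟨fun a => if ha : a ∈ s then ι ⟨a, ha⟩ else Classical.arbitrary β,
    fun a ha b hb hab => ?_, fun a ha => ?_⟩
  · simp only [mem_coe] at ha hb
    simp only [dif_pos ha, dif_pos hb] at hab
    exact congrArg Subtype.val (ι.injective (Subtype.ext hab))
  · simp only [dif_pos (mem_coe.1 ha)]
    exact (ι ⟨a, ha⟩).2

section Induce

variable {r n m : ℕ} {𝓕 : Set FinHypergraph} {T : Finset ℕ} {G H : FinHypergraph}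

/-- Relabelled onto `range #T`, so that the subhypergraphs induced on `m`-sets range over finitely
many hypergraphs. -/
noncomputable def induce (T : Finset ℕ) (G : FinHypergraph) : FinHypergraph where
  verts := range #T
  edges := {e ∈ (range #T).powerset | e.image (enum T) ∈ G.edges}
  edge_sub _ he := mem_powerset.1 (mem_filter.1 he).1

theorem image_enum_image_rank {e : Finset ℕ} (he : e ⊆ T) :
    (e.image (rank T)).image (enum T) = e := by
  rw [image_image]
  exact (image_congr fun x hx => enum_rank (he hx)).trans image_id'

theorem image_rank_image_enum {e : Finset ℕ} (he : e ⊆ range #T) :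
    (e.image (enum T)).image (rank T) = e := by
  rw [image_image]
  exact (image_congr fun i hi => rank_enum (mem_range.1 (he hi))).trans image_id'

theorem isUniform_induce (hu : G.IsUniform r) : (induce T G).IsUniform r := fun e he => by
  obtain ⟨he_sub, he_edge⟩ := mem_filter.1 he
  rw [← hu _ he_edge, card_image_of_injOn (injOn_enum.mono (coe_subset.2 (mem_powerset.1 he_sub)))]

theorem card_induce_edges : #(induce T G).edges = #{e ∈ G.edges | e ⊆ T} := by
  refine card_nbij' (image (enum T)) (image (rank T)) (fun e he => ?_) (fun e he => ?_)
    (fun e he => image_rank_image_enum (mem_powerset.1 (mem_filter.1 he).1))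
    (fun e he => image_enum_image_rank (mem_filter.1 he).2)
  · obtain ⟨he_sub, he_edge⟩ := mem_filter.1 he
    exact mem_filter.2
      ⟨he_edge, (image_subset_image (mem_powerset.1 he_sub)).trans_eq image_enum_range⟩
  · obtain ⟨he_edge, he_sub⟩ := mem_filter.1 he
    refine mem_filter.2 ⟨mem_powerset.2 fun i hi => ?_, by rwa [image_enum_image_rank he_sub]⟩
    obtain ⟨x, hx, rfl⟩ := mem_image.1 hi
    exact mem_range.2 (rank_lt_card (he_sub hx))

theorem induce_containsCopy (hT : T ⊆ G.verts) : (induce T G).ContainsCopy G :=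
  ⟨enum T, injOn_enum, fun _ hi => hT (enum_mem (mem_range.1 hi)), fun _ he => (mem_filter.1 he).2⟩

noncomputable def enumTuple (m : ℕ) (T : Finset ℕ) : Fin m → ℕ := fun i => enum T i

theorem enumTuple_mem_piFinset {X : Finset ℕ} (hT : T ∈ powersetCard m X) :
    enumTuple m T ∈ Fintype.piFinset fun _ => X :=
  Fintype.mem_piFinset.2 fun i =>
    (mem_powersetCard.1 hT).1 (enum_mem ((mem_powersetCard.1 hT).2 ▸ i.2))

theorem injOn_enumTuple (X : Finset ℕ) : Set.InjOn (enumTuple m) (powersetCard m X) := by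
  intro T hT T' hT' h
  rw [← image_enum_range (T := T), ← image_enum_range (T := T'), (mem_powersetCard.1 hT).2,
    (mem_powersetCard.1 hT').2]
  exact image_congr fun i hi => congrFun h ⟨i, mem_range.1 hi⟩

theorem embeds_induce_of_eqOn {x : ℕ → ℕ} (hx : Set.EqOn (enum T) x (range #T)) :
    Set.InjOn x (induce T G).verts ∧ ∀ e ∈ (induce T G).edges, e.image x ∈ G.edges := by
  refine ⟨injOn_enum.congr hx, fun e he => ?_⟩
  obtain ⟨he_sub, he_edge⟩ := mem_filter.1 he
  rwa [image_congr (hx.mono (coe_subset.2 (mem_powerset.1 he_sub)))] at he_edge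

end Induce

section ExtremalNumber

variable {r n m : ℕ} {𝓕 : Set FinHypergraph} {G H : FinHypergraph}

theorem bddAbove_card_edges_free :
    BddAbove {m : ℕ | ∃ H : FinHypergraph, H.verts = Finset.range n ∧ H.IsUniform r ∧
      H.Free 𝓕 ∧ H.edges.card = m} :=
  ⟨n.choose r, by rintro _ ⟨H, hv, hu, -, rfl⟩; simpa [hv] using hu.card_edges_le⟩

theorem card_le_exNum (hv : G.verts = range n) (hu : G.IsUniform r) (hf : G.Free 𝓕) :
    #G.edges ≤ exNum r n 𝓕 :=
  le_csSup bddAbove_card_edges_free ⟨G, hv, hu, hf, rfl⟩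

theorem exNum_le_of_forall {k : ℝ} (hk : 0 ≤ k)
    (h : ∀ G : FinHypergraph, G.verts = range n → G.IsUniform r → G.Free 𝓕 → (#G.edges : ℝ) ≤ k) :
    (exNum r n 𝓕 : ℝ) ≤ k := by
  obtain hS | hS := Set.eq_empty_or_nonempty {m : ℕ | ∃ H : FinHypergraph,
    H.verts = Finset.range n ∧ H.IsUniform r ∧ H.Free 𝓕 ∧ H.edges.card = m}
  · rwa [exNum, hS, csSup_empty, bot_eq_zero, Nat.cast_zero]
  · obtain ⟨G, hv, hu, hf, hG⟩ := Nat.sSup_mem hS bddAbove_card_edges_free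
    rw [exNum, ← hG]
    exact h G hv hu hf

theorem card_powersetCard_filter_superset {α : Type*} [DecidableEq α] {X R : Finset α}
    (hRX : R ⊆ X) (hRm : #R ≤ m) :
    #{T ∈ powersetCard m X | R ⊆ T} = (#X - #R).choose (m - #R) := by
  rw [← card_sdiff_of_subset hRX, ← card_powersetCard]
  refine card_nbij' (· \ R) (· ∪ R) (fun T hT => ?_) (fun U hU => ?_) (fun T hT => ?_)
    (fun U hU => ?_)
  · obtain ⟨hT, hRT⟩ := mem_filter.1 hT
    obtain ⟨hTX, hTm⟩ := mem_powersetCard.1 hT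
    exact mem_powersetCard.2 ⟨sdiff_subset_sdiff hTX le_rfl, by rw [card_sdiff_of_subset hRT, hTm]⟩
  · obtain ⟨hUX, hUm⟩ := mem_powersetCard.1 hU
    have hdisj : Disjoint U R := disjoint_of_subset_left hUX sdiff_disjoint
    refine mem_filter.2 ⟨mem_powersetCard.2 ⟨union_subset (hUX.trans sdiff_subset) hRX, ?_⟩,
      subset_union_right⟩
    rw [card_union_of_disjoint hdisj, hUm]
    omega
  · exact sdiff_union_of_subset (mem_filter.1 hT).2
  · exact union_sdiff_cancel_right
      (disjoint_of_subset_left (mem_powersetCard.1 hU).1 sdiff_disjoint)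

theorem FinHypergraph.IsUniform.sum_card_edges_subset (hu : H.IsUniform r) (hrm : r ≤ m) :
    ∑ T ∈ powersetCard m H.verts, #{e ∈ H.edges | e ⊆ T} =
      #H.edges * (#H.verts - r).choose (m - r) := by
  simp_rw [card_filter]
  rw [sum_comm, card_eq_sum_ones, sum_mul]
  refine sum_congr rfl fun e he => ?_
  rw [← card_filter, ← hu e he, card_powersetCard_filter_superset (H.edge_sub e he) (hu e he ▸ hrm),
    one_mul]

theorem card_edges_mul_le_exNum (hv : G.verts = range (n + 1)) (hu : G.IsUniform r)
    (hf : G.Free 𝓕) (hrn : r ≤ n) : #G.edges * (n + 1 - r) ≤ (n + 1) * exNum r n 𝓕 := by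
  have hcount := hu.sum_card_edges_subset hrn
  rw [hv, card_range, show n + 1 - r = n - r + 1 by omega, Nat.choose_succ_self_right] at hcount
  calc #G.edges * (n + 1 - r) = ∑ T ∈ powersetCard n (range (n + 1)), #{e ∈ G.edges | e ⊆ T} := by
        rw [hcount]; congr 1; omega
    _ ≤ ∑ _T ∈ powersetCard n (range (n + 1)), exNum r n 𝓕 := sum_le_sum fun T hT => by
        obtain ⟨hT, hTn⟩ := mem_powersetCard.1 hT
        rw [← card_induce_edges, ← hTn]
        exact card_le_exNum rfl (isUniform_induce hu)
          (hf.of_containsCopy (induce_containsCopy (hv ▸ hT)))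
    _ = (n + 1) * exNum r n 𝓕 := by
        rw [sum_const, card_powersetCard, card_range, Nat.choose_succ_self_right, smul_eq_mul]

end ExtremalNumber

section TuranDensity

variable {r n : ℕ} {𝓕 : Set FinHypergraph}

noncomputable def exDensity (r : ℕ) (𝓕 : Set FinHypergraph) (n : ℕ) : ℝ :=
  (exNum r n 𝓕 : ℝ) / (n.choose r : ℝ)

theorem exDensity_nonneg : 0 ≤ exDensity r 𝓕 n := by
  unfold exDensity; positivity

theorem exDensity_succ_le (hrn : r ≤ n) : exDensity r 𝓕 (n + 1) ≤ exDensity r 𝓕 n := by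
  have hpos : (0 : ℝ) < n.choose r := by exact_mod_cast Nat.choose_pos hrn
  rw [exDensity, exDensity, div_le_iff₀ (by exact_mod_cast Nat.choose_pos (hrn.trans n.le_succ))]
  refine exNum_le_of_forall (by positivity) fun G hv hu hf => ?_
  rw [div_mul_eq_mul_div, le_div_iff₀ hpos]
  have hG := card_edges_mul_le_exNum hv hu hf hrn
  have hchoose := Nat.choose_mul_succ_eq n r
  have : #G.edges * n.choose r * (n + 1) ≤ exNum r n 𝓕 * (n + 1).choose r * (n + 1) := by
    calc #G.edges * n.choose r * (n + 1) = #G.edges * (n + 1 - r) * (n + 1).choose r := by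
          rw [mul_assoc, hchoose]; ring
      _ ≤ (n + 1) * exNum r n 𝓕 * (n + 1).choose r := Nat.mul_le_mul_right _ hG
      _ = _ := by ring
  exact_mod_cast Nat.le_of_mul_le_mul_right this n.succ_pos

theorem tendsto_exDensity : Tendsto (exDensity r 𝓕) atTop (𝓝 (turanDensity r 𝓕)) := by
  have hanti : Antitone fun k => exDensity r 𝓕 (k + r) :=
    antitone_nat_of_succ_le fun k => by
      simpa only [add_right_comm] using exDensity_succ_le (Nat.le_add_left r k)
  have hlim := (tendsto_add_atTop_iff_nat r).1 (tendsto_atTop_ciInf hanti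
    ⟨0, by rintro _ ⟨k, rfl⟩; exact exDensity_nonneg⟩)
  convert hlim
  exact lim_eq hlim

theorem turanDensity_nonneg : 0 ≤ turanDensity r 𝓕 :=
  ge_of_tendsto' tendsto_exDensity fun _ => exDensity_nonneg

end TuranDensity

section Lagrangian

variable {r : ℕ} {H : FinHypergraph}

theorem lagrangian_nonneg (H : FinHypergraph) : 0 ≤ lagrangian H :=
  Real.sSup_nonneg <| by
    rintro _ ⟨w, hw, -, rfl⟩
    exact sum_nonneg fun e _ => prod_nonneg fun v _ => hw v

theorem blowupDensity_nonneg (r : ℕ) (H : FinHypergraph) : 0 ≤ blowupDensity r H :=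
  mul_nonneg (Nat.cast_nonneg _) (lagrangian_nonneg H)

theorem card_edges_mul_le_lagrangian (hu : H.IsUniform r) (hV : H.verts.Nonempty) :
    #H.edges * ((#H.verts : ℝ)⁻¹) ^ r ≤ lagrangian H := by
  have hbdd : BddAbove {s : ℝ | ∃ w : ℕ → ℝ, (∀ v, 0 ≤ w v) ∧ (∑ v ∈ H.verts, w v) = 1 ∧
      s = ∑ e ∈ H.edges, ∏ v ∈ e, w v} := by
    refine ⟨#H.edges, ?_⟩
    rintro _ ⟨w, hw, hsum, rfl⟩
    calc ∑ e ∈ H.edges, ∏ v ∈ e, w v ≤ ∑ _e ∈ H.edges, (1 : ℝ) :=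
          sum_le_sum fun e he => prod_le_one (fun v _ => hw v) fun v hv =>
            hsum ▸ single_le_sum (fun u _ => hw u) (H.edge_sub e he hv)
      _ = #H.edges := by simp
  have hcard : (#H.verts : ℝ) ≠ 0 := by exact_mod_cast hV.card_ne_zero
  refine le_csSup hbdd ⟨fun _ => (#H.verts : ℝ)⁻¹, fun _ => by positivity, ?_, ?_⟩
  · rw [sum_const, nsmul_eq_mul, mul_inv_cancel₀ hcard]
  · rw [sum_congr rfl fun e he => by rw [prod_const, hu e he], sum_const, nsmul_eq_mul]

end Lagrangian

section Blowup

variable {α β : Type*} [DecidableEq α] [DecidableEq β]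
variable {r n : ℕ} {𝓕 : Set FinHypergraph} {H : FinHypergraph} {col : ℕ → ℕ}

open Classical in
theorem prod_card_fiber_le_card_sections (X : Finset α) (col : α → β) (e : Finset β) :
    ∏ u ∈ e, #{x ∈ X | col x = u} ≤
      #(X.powerset.filter fun S : Finset α => Set.InjOn col ↑S ∧ S.image col = e) := by
  rw [← prod_coe_sort e, ← Fintype.card_piFinset]
  have hsec {g} (hg : g ∈ Fintype.piFinset fun u : e => {x ∈ X | col x = u}) (u : e) :
      g u ∈ X ∧ col (g u) = u :=
    mem_filter.1 (Fintype.mem_piFinset.1 hg u)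
  refine card_le_card_of_injOn (fun g => univ.image g) (fun g hg => ?_) (fun g hg g' hg' h => ?_)
  · refine mem_filter.2 ⟨mem_powerset.2 fun x hx => ?_, fun x hx y hy hxy => ?_, ?_⟩
    · obtain ⟨u, -, rfl⟩ := mem_image.1 hx
      exact (hsec hg u).1
    · obtain ⟨u, -, rfl⟩ := mem_image.1 (mem_coe.1 hx)
      obtain ⟨v, -, rfl⟩ := mem_image.1 (mem_coe.1 hy)
      rw [(hsec hg u).2, (hsec hg v).2] at hxy
      rw [Subtype.ext hxy]
    · rw [image_image, image_congr (f := col ∘ g) (g := Subtype.val) fun u _ => (hsec hg u).2,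
        univ_eq_attach, attach_image_val]
  · funext u
    have hgu : g u ∈ univ.image g' := by
      have h' : univ.image g = univ.image g' := h
      exact h' ▸ mem_image_of_mem g (mem_univ u)
    obtain ⟨v, -, hv⟩ := mem_image.1 hgu
    have huv : v = u := Subtype.ext (by rw [← (hsec hg' v).2, hv, (hsec hg u).2])
    rw [← hv, huv]

noncomputable def blowup (H : FinHypergraph) (col : ℕ → ℕ) (n : ℕ) : FinHypergraph :=
  open Classical in
  { verts := range n
    edges := {S ∈ (range n).powerset | Set.InjOn col S ∧ S.image col ∈ H.edges}
    edge_sub := fun _ hS => mem_powerset.1 (mem_filter.1 hS).1 }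

theorem isUniform_blowup (hu : H.IsUniform r) : (blowup H col n).IsUniform r := fun S hS => by
  obtain ⟨-, hinj, hS⟩ := mem_filter.1 hS
  rw [← hu _ hS, card_image_of_injOn hinj]

theorem isHom_blowup (hcol : ∀ x, col x ∈ H.verts) : IsHom col (blowup H col n) H :=
  ⟨fun x _ => hcol x, fun _ hS => (mem_filter.1 hS).2.2⟩

theorem sum_prod_card_fiber_le_card_blowup_edges :
    ∑ e ∈ H.edges, ∏ u ∈ e, #{x ∈ range n | col x = u} ≤ #(blowup H col n).edges := by
  rw [card_eq_sum_card_fiberwise fun S hS => (mem_filter.1 hS).2.2]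
  refine sum_le_sum fun e he => (prod_card_fiber_le_card_sections _ _ _).trans
    (card_le_card fun S hS => ?_)
  obtain ⟨hSX, hinj, rfl⟩ := mem_filter.1 hS
  exact mem_filter.2 ⟨mem_filter.2 ⟨hSX, hinj, he⟩, rfl⟩

theorem exists_coloring {V : Finset ℕ} {u₀ : ℕ} (hu₀ : u₀ ∈ V) {sz : ℕ → ℕ}
    (hsz : ∑ u ∈ V, sz u ≤ n) :
    ∃ col : ℕ → ℕ, (∀ x, col x ∈ V) ∧ ∀ u ∈ V, sz u ≤ #{x ∈ range n | col x = u} := by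
  set P := V.sigma fun u => range (sz u)
  obtain ⟨ι, hinj, hmaps⟩ : ∃ ι : (Σ _ : ℕ, ℕ) → ℕ, Set.InjOn ι P ∧ Set.MapsTo ι P (range n) :=
    exists_injOn_mapsTo_of_card_le (by simpa [P] using hsz)
  have hcol {p} (hp : p ∈ P) : (Function.invFunOn ι P (ι p)).1 = p.1 := by
    rw [hinj.leftInvOn_invFunOn hp]
  refine ⟨fun x => if x ∈ P.image ι then (Function.invFunOn ι P x).1 else u₀, fun x => ?_,
    fun u hu => ?_⟩
  · dsimp only
    split_ifs with hx
    · obtain ⟨p, hp, rfl⟩ := mem_image.1 hx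
      rw [hcol hp]
      exact (mem_sigma.1 hp).1
    · exact hu₀
  · have hmem {i} (hi : i ∈ range (sz u)) : (⟨u, i⟩ : Σ _ : ℕ, ℕ) ∈ P := mem_sigma.2 ⟨hu, hi⟩
    calc sz u = #((range (sz u)).image fun i => ι ⟨u, i⟩) := by
          rw [card_image_of_injOn fun i hi j hj h => by
            simpa using hinj (hmem (mem_coe.1 hi)) (hmem (mem_coe.1 hj)) h, card_range]
      _ ≤ _ := card_le_card fun x hx => by
          obtain ⟨i, hi, rfl⟩ := mem_image.1 hx
          refine mem_filter.2 ⟨hmaps (hmem hi), ?_⟩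
          dsimp only
          rw [if_pos (mem_image_of_mem _ (hmem hi)), hcol (hmem hi)]

theorem sum_prod_floor_le_exNum (hu : H.IsUniform r) (hH : H.HomFree 𝓕) {w : ℕ → ℝ}
    (hw : ∀ v, 0 ≤ w v) (hsum : ∑ v ∈ H.verts, w v = 1) (n : ℕ) :
    ∑ e ∈ H.edges, ∏ u ∈ e, ⌊w u * n⌋₊ ≤ exNum r n 𝓕 := by
  obtain ⟨u₀, hu₀⟩ := nonempty_of_sum_ne_zero (hsum.trans_ne one_ne_zero)
  have hsz : ∑ u ∈ H.verts, ⌊w u * n⌋₊ ≤ n := by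
    have : (∑ u ∈ H.verts, ⌊w u * n⌋₊ : ℝ) ≤ n := by
      calc (∑ u ∈ H.verts, ⌊w u * n⌋₊ : ℝ) ≤ ∑ u ∈ H.verts, w u * n :=
            sum_le_sum fun u _ => Nat.floor_le (by have := hw u; positivity)
        _ = n := by rw [← sum_mul, hsum, one_mul]
    exact_mod_cast this
  obtain ⟨col, hcol, hfiber⟩ := exists_coloring hu₀ hsz
  calc ∑ e ∈ H.edges, ∏ u ∈ e, ⌊w u * n⌋₊
      ≤ ∑ e ∈ H.edges, ∏ u ∈ e, #{x ∈ range n | col x = u} :=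
        sum_le_sum fun e he => prod_le_prod' fun u hu => hfiber u (H.edge_sub e he hu)
    _ ≤ #(blowup H col n).edges := sum_prod_card_fiber_le_card_blowup_edges
    _ ≤ exNum r n 𝓕 :=
        card_le_exNum rfl (isUniform_blowup hu) (hH.free_of_isHom (isHom_blowup hcol))

end Blowup

section LowerBound

variable {r : ℕ} {𝓕 : Set FinHypergraph} {H : FinHypergraph}

open Asymptotics in
theorem tendsto_pow_div_choose (k : ℕ) :
    Tendsto (fun n : ℕ => (n : ℝ) ^ k / n.choose k) atTop (𝓝 (k.factorial : ℝ)) := by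
  have hequiv : (fun n : ℕ => (n : ℝ) ^ k / ((n : ℝ) ^ k / k.factorial)) ~[atTop]
      fun n : ℕ => (n : ℝ) ^ k / n.choose k :=
    IsEquivalent.refl.div (isEquivalent_choose k).symm
  refine hequiv.tendsto_nhds (tendsto_const_nhds.congr' ?_)
  filter_upwards [eventually_ge_atTop 1] with n hn
  have : (n : ℝ) ^ k ≠ 0 := by positivity
  field_simp

theorem eventually_mul_pow_div_le_mul_choose (r : ℕ) (s : ℝ) {η : ℝ} (hη : 0 < η) :
    ∀ᶠ m : ℕ in atTop, s * m ^ r / r.factorial ≤ (s + η) * m.choose r := by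
  have hfac : (0 : ℝ) < r.factorial := by positivity
  have hlim : Tendsto (fun m : ℕ => s * ((m : ℝ) ^ r / m.choose r) / r.factorial) atTop
      (𝓝 (s * r.factorial / r.factorial)) :=
    ((tendsto_pow_div_choose r).const_mul s).div_const _
  rw [mul_div_cancel_right₀ _ hfac.ne'] at hlim
  filter_upwards [hlim.eventually (gt_mem_nhds (lt_add_of_pos_right s hη)), eventually_ge_atTop r]
    with m hm hrm
  have hC : (0 : ℝ) < m.choose r := by exact_mod_cast Nat.choose_pos hrm
  rw [mul_div_assoc', div_div, div_lt_iff₀ (by positivity)] at hm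
  rw [div_le_iff₀ hfac]
  linarith

theorem tendsto_sum_prod_floor_div_choose (hu : H.IsUniform r) {w : ℕ → ℝ} (hw : ∀ v, 0 ≤ w v) :
    Tendsto (fun n : ℕ => (∑ e ∈ H.edges, ∏ u ∈ e, (⌊w u * n⌋₊ : ℝ)) / n.choose r) atTop
      (𝓝 (r.factorial * ∑ e ∈ H.edges, ∏ u ∈ e, w u)) := by
  have hfloor : Tendsto (fun n : ℕ => ∑ e ∈ H.edges, ∏ u ∈ e, ((⌊w u * n⌋₊ : ℝ) / n)) atTop
      (𝓝 (∑ e ∈ H.edges, ∏ u ∈ e, w u)) :=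
    tendsto_finsetSum _ fun e _ => tendsto_finsetProd _ fun u _ =>
      (tendsto_nat_floor_mul_div_atTop (hw u)).comp tendsto_natCast_atTop_atTop
  refine ((tendsto_pow_div_choose r).mul hfloor).congr' ?_
  filter_upwards [eventually_ge_atTop 1] with n hn
  have hn : (n : ℝ) ^ r ≠ 0 := by positivity
  rw [sum_congr rfl fun e he => by rw [prod_div_distrib, prod_const, hu e he], ← sum_div]
  field_simp
  simp only [mul_comm]

theorem blowupDensity_le_turanDensity (hu : H.IsUniform r) (hH : H.HomFree 𝓕) :
    blowupDensity r H ≤ turanDensity r 𝓕 := by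
  have hfac : (0 : ℝ) < r.factorial := by positivity
  rw [blowupDensity, ← le_div_iff₀' hfac]
  refine Real.sSup_le (fun s ⟨w, hw, hsum, hs⟩ => ?_) (div_nonneg turanDensity_nonneg hfac.le)
  rw [hs, le_div_iff₀' hfac]
  refine le_of_tendsto_of_tendsto' (tendsto_sum_prod_floor_div_choose hu hw) tendsto_exDensity
    fun n => ?_
  rw [exDensity]
  gcongr
  exact_mod_cast sum_prod_floor_le_exNum hu hH hw hsum n

end LowerBound

section Box

variable {α β : Type*}

theorem mul_card_le_card_filter_half_le {A : Finset β} {f : β → ℝ} {M δ : ℝ} (hM : 0 < M)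
    (hδ : 0 ≤ δ) (hf : ∀ a ∈ A, f a ≤ M) (hsum : δ * #A * M ≤ ∑ a ∈ A, f a) :
    δ / 2 * #A ≤ #{a ∈ A | δ * M / 2 ≤ f a} := by
  have hsplit : ∑ a ∈ A, f a ≤ #{a ∈ A | δ * M / 2 ≤ f a} * M + #A * (δ * M / 2) := by
    rw [← sum_filter_add_sum_filter_not A (fun a => δ * M / 2 ≤ f a)]
    gcongr
    · exact (sum_le_card_nsmul _ _ _ fun a ha => hf a (mem_filter.1 ha).1).trans_eq
        (nsmul_eq_mul _ _)
    · refine (sum_le_card_nsmul _ _ (δ * M / 2) fun a ha =>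
        (not_le.1 (mem_filter.1 ha).2).le).trans ?_
      rw [nsmul_eq_mul]
      gcongr
      exact filter_subset _ _
  have : δ / 2 * #A * M ≤ #{a ∈ A | δ * M / 2 ≤ f a} * M := by linarith
  exact le_of_mul_le_mul_right this hM

theorem sum_card_filter_forall_eq_sum_choose (A : Finset β) (V : Finset α) (R : β → α → Prop)
    [∀ a y, Decidable (R a y)] (t : ℕ) :
    ∑ T ∈ powersetCard t V, #{a ∈ A | ∀ y ∈ T, R a y} = ∑ a ∈ A, (#{y ∈ V | R a y}).choose t := by
  rw [sum_congr rfl fun T _ => card_filter _ _, sum_comm]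
  refine sum_congr rfl fun a _ => ?_
  rw [← card_filter, ← card_powersetCard]
  congr 1
  ext T
  simp only [mem_filter, mem_powersetCard, subset_iff]
  aesop

theorem pow_mul_choose_le_choose {c : ℝ} (hc : 0 ≤ c) {n k t : ℕ}
    (h : c * n ≤ ((k + 1 - t : ℕ) : ℝ)) : c ^ t * n.choose t ≤ k.choose t := by
  have hfac : (0 : ℝ) < t.factorial := by positivity
  refine le_of_mul_le_mul_right ?_ hfac
  have hdesc (m : ℕ) : (m.choose t : ℝ) * t.factorial = m.descFactorial t := by
    rw [Nat.descFactorial_eq_factorial_mul_choose]; push_cast; ring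
  calc c ^ t * n.choose t * t.factorial = c ^ t * n.descFactorial t := by rw [mul_assoc, hdesc]
    _ ≤ c ^ t * (n : ℝ) ^ t := by gcongr; exact_mod_cast Nat.descFactorial_le_pow n t
    _ = (c * n) ^ t := by ring
    _ ≤ ((k + 1 - t : ℕ) : ℝ) ^ t := by gcongr
    _ ≤ k.descFactorial t := by exact_mod_cast Nat.pow_sub_le_descFactorial k t
    _ = k.choose t * t.factorial := (hdesc k).symm

/-- Averaging over `T`: the `a` related to at least `δ #V / 2` elements of `V` make up half of `A`,
and each of them is related to all elements of a `(δ / 4) ^ t`-fraction of the `t`-sets. -/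
theorem exists_card_filter_forall_ge (A : Finset β) (V : Finset α) (R : β → α → Prop)
    [∀ a y, Decidable (R a y)] {δ : ℝ} (hδ : δ ≤ 1) {t : ℕ} (hV : 4 * (t + 1) ≤ δ * #V)
    (hR : δ * #A * #V ≤ ∑ a ∈ A, (#{y ∈ V | R a y} : ℝ)) :
    ∃ T ⊆ V, #T = t ∧ (δ / 4) ^ (t + 1) * #A ≤ #{a ∈ A | ∀ y ∈ T, R a y} := by
  have hV0 : (0 : ℝ) ≤ #V := Nat.cast_nonneg _
  have hn : (0 : ℝ) < #V := by
    rcases hV0.lt_or_eq with h | h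
    · exact h
    · rw [← h] at hV; nlinarith
  have hδ0 : 0 < δ := by nlinarith
  have htV : t ≤ #V := by
    have : (t : ℝ) ≤ #V := by nlinarith
    exact_mod_cast this
  set X := {a ∈ A | δ * #V / 2 ≤ (#{y ∈ V | R a y} : ℝ)}
  have hX : δ / 2 * #A ≤ #X := mul_card_le_card_filter_half_le hn hδ0.le
    (fun a _ => by exact_mod_cast card_filter_le _ _) hR
  have hrich : ∀ a ∈ X, (δ / 4) ^ t * (#V).choose t ≤ ((#{y ∈ V | R a y}).choose t : ℝ) := by
    intro a ha
    have hda := (mem_filter.1 ha).2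
    refine pow_mul_choose_le_choose (by positivity) ?_
    rw [Nat.cast_sub (by exact_mod_cast (show (t : ℝ) ≤ #{y ∈ V | R a y} + 1 by nlinarith))]
    push_cast
    nlinarith
  have htotal : (powersetCard t V).card • (#X * (δ / 4) ^ t) ≤
      ∑ T ∈ powersetCard t V, (#{a ∈ A | ∀ y ∈ T, R a y} : ℝ) := by
    rw [← Nat.cast_sum, sum_card_filter_forall_eq_sum_choose, Nat.cast_sum, card_powersetCard,
      nsmul_eq_mul]
    calc ((#V).choose t : ℝ) * (#X * (δ / 4) ^ t) = ∑ _a ∈ X, (δ / 4) ^ t * (#V).choose t := by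
          rw [sum_const, nsmul_eq_mul]; ring
      _ ≤ ∑ a ∈ X, ((#{y ∈ V | R a y}).choose t : ℝ) := sum_le_sum hrich
      _ ≤ ∑ a ∈ A, ((#{y ∈ V | R a y}).choose t : ℝ) :=
          sum_le_sum_of_subset_of_nonneg (filter_subset _ _) fun _ _ _ => Nat.cast_nonneg _
  obtain ⟨T, hT, hle⟩ := exists_le_of_sum_le (powersetCard_nonempty.2 htV)
    ((sum_const _).trans_le htotal)
  refine ⟨T, (mem_powersetCard.1 hT).1, (mem_powersetCard.1 hT).2, ?_⟩
  calc (δ / 4) ^ (t + 1) * #A = (δ / 4) ^ t * (δ / 4 * #A) := by ring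
    _ ≤ (δ / 4) ^ t * #X := by gcongr; linarith [hX]
    _ ≤ _ := by rw [mul_comm]; exact hle

theorem card_eq_sum_card_snoc_mem [DecidableEq α] {v : ℕ} (V : Finset α)
    {S : Finset (Fin (v + 1) → α)} (hS : S ⊆ Fintype.piFinset fun _ => V) :
    #S = ∑ x ∈ Fintype.piFinset (fun _ : Fin v => V), #{y ∈ V | Fin.snoc x y ∈ S} := by
  rw [card_eq_sum_card_fiberwise (f := Fin.init) fun s hs =>
    (Fin.mem_piFinset_iff_last_init.1 (hS hs)).2]
  refine sum_congr rfl fun x _ => card_nbij' (· (Fin.last v)) (Fin.snoc (α := fun _ => α) x)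
    (fun s hs => ?_) (fun y hy => ?_) (fun s hs => ?_) (fun y _ => by simp)
  · obtain ⟨hsS, rfl⟩ := mem_filter.1 hs
    exact mem_filter.2 ⟨(Fin.mem_piFinset_iff_last_init.1 (hS hsS)).1, by rwa [Fin.snoc_init_self]⟩
  · exact mem_filter.2 ⟨(mem_filter.1 hy).2, Fin.init_snoc ..⟩
  · obtain ⟨-, rfl⟩ := mem_filter.1 hs
    exact Fin.snoc_init_self s

theorem le_one_of_mul_pow_le_card {v : ℕ} {V : Finset α} {S : Finset (Fin v → α)}
    (hSV : S ⊆ Fintype.piFinset fun _ => V) (hV : 0 < #V) {δ : ℝ} (hS : δ * #V ^ v ≤ #S) :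
    δ ≤ 1 := by
  have hSle : (#S : ℝ) ≤ #V ^ v := by
    have := card_le_card hSV
    simp only [Fintype.card_piFinset, prod_const, card_univ, Fintype.card_fin] at this
    exact_mod_cast this
  have hpos : (0 : ℝ) < #V ^ v := by positivity
  nlinarith

/-- Erdős's box theorem. -/
theorem exists_box_subset [DecidableEq α] (t : ℕ) :
    ∀ (v : ℕ) {δ : ℝ}, 0 < δ → ∃ N : ℕ, ∀ V : Finset α, N ≤ #V →
    ∀ S ⊆ Fintype.piFinset (fun _ : Fin v => V), δ * #V ^ v ≤ #S →
      ∃ B : Fin v → Finset α, (∀ i, B i ⊆ V ∧ #(B i) = t) ∧ Fintype.piFinset B ⊆ S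
  | 0, δ, hδ => ⟨0, fun V _ S _ hS => by
      have hS' : δ ≤ #S := by simpa using hS
      obtain ⟨s, hs⟩ : S.Nonempty := card_pos.1 (by exact_mod_cast hδ.trans_le hS')
      exact ⟨fun i => i.elim0, fun i => i.elim0, fun f _ => by rwa [Subsingleton.elim f s]⟩⟩
  | v + 1, δ, hδ => by
    obtain ⟨N, hN⟩ := exists_box_subset t v (δ := (δ / 4) ^ (t + 1)) (by positivity)
    refine ⟨max N ⌈4 * (t + 1) / δ⌉₊, fun V hV S hSV hS => ?_⟩
    have hVδ : 4 * (t + 1) ≤ δ * #V := by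
      rw [← div_le_iff₀' hδ]
      exact (Nat.le_ceil _).trans (by exact_mod_cast le_of_max_le_right hV)
    have hcard : (#(Fintype.piFinset fun _ : Fin v => V) : ℝ) = #V ^ v := by simp
    have hδ1 := le_one_of_mul_pow_le_card hSV (by exact_mod_cast (by nlinarith : (0 : ℝ) < #V)) hS
    obtain ⟨T, hTV, hTt, hT⟩ := exists_card_filter_forall_ge (Fintype.piFinset fun _ : Fin v => V) V
      (fun x y => Fin.snoc x y ∈ S) hδ1 hVδ (by
        rw [hcard, ← Nat.cast_sum, ← card_eq_sum_card_snoc_mem V hSV]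
        rwa [pow_succ, ← mul_assoc] at hS)
    rw [hcard] at hT
    obtain ⟨B, hB, hBS⟩ := hN V (le_of_max_le_left hV) _ (filter_subset _ _) hT
    refine ⟨Fin.snoc B T, fun i => ?_, fun f hf => ?_⟩
    · induction i using Fin.lastCases with
      | last => simpa using ⟨hTV, hTt⟩
      | cast j => simpa using hB j
    · rw [Fin.mem_piFinset_iff_last_init] at hf
      simp only [Fin.snoc_last, Fin.init_snoc] at hf
      have := (mem_filter.1 (hBS hf.2)).2 _ hf.1
      rwa [Fin.snoc_init_self] at this

end Box

section UpperBound

variable {r n m : ℕ} {𝓕 : Set FinHypergraph} {F G P : FinHypergraph} {T : Finset ℕ}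

theorem pairwiseDisjoint_of_forall_injOn {V : Finset ℕ} {B : ℕ → Finset ℕ}
    (hne : ∀ u ∈ V, (B u).Nonempty)
    (hinj : ∀ x : ℕ → ℕ, (∀ u ∈ V, x u ∈ B u) → Set.InjOn x V) :
    (V : Set ℕ).PairwiseDisjoint B := by
  choose! b hb using hne
  refine fun u hu u' hu' huu' => disjoint_left.2 fun z hz hz' => huu' ?_
  refine hinj (fun w => if w = u ∨ w = u' then z else b w) (fun w hw => ?_) hu hu' (by simp)
  split_ifs with hw'
  · rcases hw' with rfl | rfl <;> assumption
  · exact hb w hw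

theorem containsCopy_of_forall_mem_box {h : ℕ → ℕ} (hh : IsHom h F P)
    (hinj : ∀ e ∈ F.edges, Set.InjOn h e) {B : ℕ → Finset ℕ}
    (hB : ∀ u ∈ P.verts, B u ⊆ G.verts ∧ #F.verts < #(B u))
    (hbox : ∀ x : ℕ → ℕ, (∀ u ∈ P.verts, x u ∈ B u) →
      Set.InjOn x P.verts ∧ ∀ e ∈ P.edges, e.image x ∈ G.edges) :
    F.ContainsCopy G := by
  have hne : ∀ u ∈ P.verts, (B u).Nonempty := fun u hu =>
    card_pos.1 (Nat.zero_lt_of_lt (hB u hu).2)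
  have hdisj := pairwiseDisjoint_of_forall_injOn hne fun x hx => (hbox x hx).1
  choose! b hb using hne
  choose! emb hemb using fun u hu => exists_injOn_mapsTo_of_card_le (hB u hu).2.le
  set ℓ : ℕ → ℕ := fun v => emb (h v) v
  have hℓ : ∀ v ∈ F.verts, ℓ v ∈ B (h v) := fun v hv => (hemb _ (hh.1 v hv)).2 hv
  refine ⟨ℓ, fun a ha a' ha' hℓa => ?_, fun v hv => (hB _ (hh.1 v hv)).1 (hℓ v hv),
    fun e he => ?_⟩
  · have hha : h a = h a' :=
      hdisj.elim_finset (hh.1 a ha) (hh.1 a' ha') _ (hℓ a ha) (hℓa ▸ hℓ a' ha')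
    exact (hemb _ (hh.1 a ha)).1 ha ha' (by simpa only [ℓ, hha] using hℓa)
  · set x : ℕ → ℕ := fun w => if w ∈ e.image h then ℓ (Function.invFunOn h e w) else b w
    have hx : ∀ v ∈ e, x (h v) = ℓ v := fun v hv => by
      simp only [x, if_pos (mem_image_of_mem h hv), (hinj e he).leftInvOn_invFunOn (mem_coe.2 hv)]
    have hxB : ∀ w ∈ P.verts, x w ∈ B w := by
      intro w hw
      by_cases hwe : w ∈ e.image h
      · obtain ⟨v, hv, rfl⟩ := mem_image.1 hwe
        rw [hx v hv]
        exact hℓ v (F.edge_sub e he hv)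
      · simp only [x, if_neg hwe]
        exact hb w hw
    have himage := (hbox x hxB).2 _ (hh.2 e he)
    rwa [image_image, image_congr (f := x ∘ h) (g := ℓ) fun v hv => hx v hv] at himage

theorem finite_setOf_verts_eq_range (m : ℕ) : {P : FinHypergraph | P.verts = range m}.Finite := by
  refine Set.Finite.of_finite_image (f := FinHypergraph.edges)
    ((range m).powerset.powerset.finite_toSet.subset ?_)
    fun P hP Q hQ h => FinHypergraph.ext (hP.trans hQ.symm) h
  rintro _ ⟨P, hP, rfl⟩
  exact mem_coe.2 (mem_powerset.2 fun e he => mem_powerset.2 (hP ▸ P.edge_sub e he))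

open Classical in
theorem eventually_card_induce_eq_lt (hP : P.verts = range m) (hPu : P.IsUniform r)
    (h𝓕 : ∀ F ∈ 𝓕, F.IsUniform r) (hP𝓕 : ¬ P.HomFree 𝓕) {δ : ℝ} (hδ : 0 < δ) :
    ∀ᶠ n in atTop, ∀ G : FinHypergraph, G.verts = range n → G.Free 𝓕 →
      (#{T ∈ powersetCard m (range n) | induce T G = P} : ℝ) < δ * n.choose m := by
  obtain ⟨F, hF, h, hh⟩ : ∃ F ∈ 𝓕, ∃ h, IsHom h F P := by
    simpa only [HomFree, not_forall, not_not, exists_prop] using hP𝓕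
  obtain ⟨N, hN⟩ := exists_box_subset (α := ℕ) (#F.verts + 1) m
    (δ := δ / (2 * m.factorial)) (by positivity)
  filter_upwards [eventually_ge_atTop N, eventually_mul_pow_div_le_mul_choose m 1 one_pos]
    with n hnN hn G hGv hGfree
  by_contra! hbig
  set fiber := {T ∈ powersetCard m (range n) | induce T G = P}
  set S := fiber.image (enumTuple m)
  have hS_big : δ / (2 * m.factorial) * (#(range n) : ℝ) ^ m ≤ #S := by
    rw [card_range,
      card_image_of_injOn ((injOn_enumTuple _).mono (coe_subset.2 (filter_subset _ _)))]
    calc δ / (2 * m.factorial) * (n : ℝ) ^ m = δ / 2 * (1 * n ^ m / m.factorial) := by ring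
      _ ≤ δ / 2 * ((1 + 1) * n.choose m) := by gcongr
      _ = δ * n.choose m := by ring
      _ ≤ #fiber := hbig
  obtain ⟨B, hB, hBS⟩ := hN (range n) (by rwa [card_range]) S (fun x hx => by
    obtain ⟨T, hT, rfl⟩ := mem_image.1 hx
    exact enumTuple_mem_piFinset (mem_filter.1 hT).1) hS_big
  refine hGfree F hF (containsCopy_of_forall_mem_box hh
    (fun e he => hh.injOn_of_mem_edges (h𝓕 F hF) hPu he)
    (B := fun u => if hu : u < m then B ⟨u, hu⟩ else ∅) (fun u hu => ?_) fun x hx => ?_)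
  · rw [hP, mem_range] at hu
    simp only [dif_pos hu, hGv]
    exact ⟨(hB _).1, by rw [(hB _).2]; omega⟩
  · have hxS : (fun i : Fin m => x i) ∈ S := hBS (Fintype.mem_piFinset.2 fun i => by
      simpa [dif_pos i.2] using hx i (hP ▸ mem_range.2 i.2))
    obtain ⟨T, hT, hTx⟩ := mem_image.1 hxS
    obtain ⟨hT_mem, rfl⟩ := mem_filter.1 hT
    exact embeds_induce_of_eqOn fun i hi =>
      congrFun hTx ⟨i, (mem_powersetCard.1 hT_mem).2 ▸ mem_range.1 hi⟩

open Classical in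
theorem eventually_card_not_homFree_lt (h𝓕 : ∀ F ∈ 𝓕, F.IsUniform r) (m : ℕ) {δ : ℝ}
    (hδ : 0 < δ) :
    ∀ᶠ n in atTop, ∀ G : FinHypergraph, G.verts = range n → G.IsUniform r → G.Free 𝓕 →
      (#{T ∈ powersetCard m (range n) | ¬ (induce T G).HomFree 𝓕} : ℝ) < δ * n.choose m := by
  have hfin : {P : FinHypergraph | P.verts = range m ∧ P.IsUniform r ∧ ¬ P.HomFree 𝓕}.Finite :=
    (finite_setOf_verts_eq_range m).subset fun P hP => hP.1
  set patterns := hfin.toFinset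
  have hK : (0 : ℝ) < #patterns + 1 := by positivity
  have hall := (eventually_all_finset patterns).2 fun P hP => by
    obtain ⟨hPv, hPu, hP𝓕⟩ := hfin.mem_toFinset.1 hP
    exact eventually_card_induce_eq_lt hPv hPu h𝓕 hP𝓕 (div_pos hδ hK)
  filter_upwards [hall, eventually_ge_atTop m] with n hn hmn G hGv hGu hGfree
  have hC : (0 : ℝ) < n.choose m := by exact_mod_cast Nat.choose_pos hmn
  set bad := {T ∈ powersetCard m (range n) | ¬ (induce T G).HomFree 𝓕}
  have hmaps : ∀ T ∈ bad, induce T G ∈ patterns := fun T hT => by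
    obtain ⟨hT, hbad⟩ := mem_filter.1 hT
    exact hfin.mem_toFinset.2 ⟨by rw [← (mem_powersetCard.1 hT).2]; rfl, isUniform_induce hGu, hbad⟩
  calc (#bad : ℝ) = ∑ P ∈ patterns, (#{T ∈ bad | induce T G = P} : ℝ) := by
        exact_mod_cast card_eq_sum_card_fiberwise hmaps
    _ ≤ ∑ P ∈ patterns, (#{T ∈ powersetCard m (range n) | induce T G = P} : ℝ) := by
        gcongr with P
        intro T hT
        simp only [bad, mem_filter] at hT ⊢
        tauto
    _ ≤ ∑ _P ∈ patterns, δ / (#patterns + 1) * n.choose m :=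
        sum_le_sum fun P hP => (hn P hP G hGv hGfree).le
    _ = #patterns / (#patterns + 1) * (δ * n.choose m) := by rw [sum_const, nsmul_eq_mul]; ring
    _ < δ * n.choose m := by
        refine mul_lt_of_lt_one_left (by positivity) ((div_lt_one hK).2 (lt_add_one _))

def homFreeBlowupDensities (r : ℕ) (𝓕 : Set FinHypergraph) : Set ℝ :=
  {b : ℝ | ∃ H : FinHypergraph, H.IsUniform r ∧ H.HomFree 𝓕 ∧ b = blowupDensity r H}

theorem sSup_homFreeBlowupDensities_nonneg : 0 ≤ sSup (homFreeBlowupDensities r 𝓕) :=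
  Real.sSup_nonneg <| by
    rintro _ ⟨H, -, -, rfl⟩
    exact blowupDensity_nonneg r H

theorem card_edges_subset_le_of_homFree (hGu : G.IsUniform r) (hTm : #T = m) (hm : 0 < m)
    (hT : (induce T G).HomFree 𝓕) :
    (#{e ∈ G.edges | e ⊆ T} : ℝ) ≤ sSup (homFreeBlowupDensities r 𝓕) * m ^ r / r.factorial := by
  have hb : blowupDensity r (induce T G) ≤ sSup (homFreeBlowupDensities r 𝓕) :=
    le_csSup ⟨turanDensity r 𝓕, by
      rintro _ ⟨H, hu, hH, rfl⟩
      exact blowupDensity_le_turanDensity hu hH⟩ ⟨_, isUniform_induce hGu, hT, rfl⟩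
  have hlag := card_edges_mul_le_lagrangian (isUniform_induce hGu) (H := induce T G)
    (nonempty_range_iff.2 (by omega))
  have hverts : #(induce T G).verts = m := (card_range _).trans hTm
  rw [card_induce_edges, hverts] at hlag
  have hm' : (0 : ℝ) < (m : ℝ) ^ r := by positivity
  rw [le_div_iff₀ (by positivity)]
  calc (#{e ∈ G.edges | e ⊆ T} : ℝ) * r.factorial
      = r.factorial * (#{e ∈ G.edges | e ⊆ T} * ((m : ℝ)⁻¹) ^ r) * m ^ r := by
        rw [inv_pow]
        field_simp
    _ ≤ blowupDensity r (induce T G) * m ^ r := by rw [blowupDensity]; gcongr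
    _ ≤ _ := by gcongr

open Classical in
theorem sum_card_edges_subset_le (hGu : G.IsUniform r) (hm : 0 < m) :
    ∑ T ∈ powersetCard m (range n), (#{e ∈ G.edges | e ⊆ T} : ℝ) ≤
      #{T ∈ powersetCard m (range n) | ¬ (induce T G).HomFree 𝓕} * m.choose r +
        n.choose m * (sSup (homFreeBlowupDensities r 𝓕) * m ^ r / r.factorial) := by
  rw [← sum_filter_not_add_sum_filter _ fun T => (induce T G).HomFree 𝓕]
  gcongr
  · refine (sum_le_card_nsmul _ _ _ fun T hT => ?_).trans_eq (nsmul_eq_mul _ _)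
    rw [← card_induce_edges, ← (mem_powersetCard.1 (mem_filter.1 hT).1).2]
    exact_mod_cast (isUniform_induce hGu).card_edges_le.trans_eq (by rw [induce, card_range])
  · refine (sum_le_card_nsmul _ _ (sSup (homFreeBlowupDensities r 𝓕) * m ^ r / r.factorial)
      fun T hT => ?_).trans ?_
    · obtain ⟨hT, hfree⟩ := mem_filter.1 hT
      exact card_edges_subset_le_of_homFree hGu (mem_powersetCard.1 hT).2 hm hfree
    · rw [nsmul_eq_mul]
      gcongr
      · exact div_nonneg (mul_nonneg sSup_homFreeBlowupDensities_nonneg (by positivity))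
          (by positivity)
      · exact_mod_cast (card_filter_le _ _).trans_eq (by rw [card_powersetCard, card_range])

theorem turanDensity_le_sSup (h𝓕 : ∀ F ∈ 𝓕, F.IsUniform r) :
    turanDensity r 𝓕 ≤ sSup (homFreeBlowupDensities r 𝓕) := by
  classical
  have hs : 0 ≤ sSup (homFreeBlowupDensities r 𝓕) := sSup_homFreeBlowupDensities_nonneg
  set s := sSup (homFreeBlowupDensities r 𝓕)
  refine le_of_forall_pos_le_add fun ε hε => ?_
  obtain ⟨m, hm, hrm, hm1⟩ := ((eventually_mul_pow_div_le_mul_choose r s (half_pos hε)).and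
    ((eventually_ge_atTop r).and (eventually_ge_atTop 1))).exists
  refine le_of_tendsto tendsto_exDensity ?_
  filter_upwards [eventually_card_not_homFree_lt h𝓕 m (half_pos hε), eventually_ge_atTop m]
    with n hbad hmn
  rw [exDensity, div_le_iff₀ (by exact_mod_cast Nat.choose_pos (hrm.trans hmn))]
  refine exNum_le_of_forall (by have := hε.le; positivity) fun G hGv hGu hGfree => ?_
  have hD : (0 : ℝ) < (n - r).choose (m - r) := by exact_mod_cast Nat.choose_pos (by omega)
  have hcount : (#G.edges : ℝ) * (n - r).choose (m - r) =
      ∑ T ∈ powersetCard m (range n), (#{e ∈ G.edges | e ⊆ T} : ℝ) := by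
    have := hGu.sum_card_edges_subset hrm
    rw [hGv, card_range] at this
    exact_mod_cast this.symm
  have hident : (n.choose m : ℝ) * m.choose r = n.choose r * (n - r).choose (m - r) := by
    exact_mod_cast Nat.choose_mul hrm
  refine le_of_mul_le_mul_right ?_ hD
  calc (#G.edges : ℝ) * (n - r).choose (m - r)
      ≤ #{T ∈ powersetCard m (range n) | ¬ (induce T G).HomFree 𝓕} * m.choose r +
          n.choose m * (s * m ^ r / r.factorial) := hcount ▸ sum_card_edges_subset_le hGu hm1
    _ ≤ ε / 2 * n.choose m * m.choose r + n.choose m * ((s + ε / 2) * m.choose r) := by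
        gcongr
        exact (hbad G hGv hGu hGfree).le
    _ = (s + ε) * n.choose r * (n - r).choose (m - r) := by
        linear_combination (s + ε) * hident

end UpperBound

theorem turan_density_eq_sup_blowupDensity_general (r : ℕ)
    (𝓕 : Set FinHypergraph) (h𝓕 : ∀ F ∈ 𝓕, F.IsUniform r) :
    Filter.Tendsto (fun n : ℕ => (exNum r n 𝓕 : ℝ) / (n.choose r : ℝ)) Filter.atTop
      (nhds (sSup {b : ℝ | ∃ H : FinHypergraph, H.IsUniform r ∧ H.HomFree 𝓕 ∧
        b = blowupDensity r H})) := by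
  have hsSup_le : sSup (homFreeBlowupDensities r 𝓕) ≤ turanDensity r 𝓕 :=
    Real.sSup_le (by rintro _ ⟨H, hu, hH, rfl⟩; exact blowupDensity_le_turanDensity hu hH)
      turanDensity_nonneg
  have hlim := tendsto_exDensity (r := r) (𝓕 := 𝓕)
  rwa [le_antisymm (turanDensity_le_sSup h𝓕) hsSup_le] at hlim

/-- **Lemma 2.6.** For every `r ≥ 2` and every family `𝓕` of `r`-uniform hypergraphs,
the Turán density `π(𝓕)` equals `sup { b(H) : H is an 𝓕-hom-free r-uniform hypergraph }`:
the sequence `ex(n, 𝓕) / (n choose r)` tends to this supremum. -/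
theorem turan_density_eq_sup_blowupDensity (r : ℕ) (hr : 2 ≤ r)
    (𝓕 : Set FinHypergraph) (h𝓕 : ∀ F ∈ 𝓕, F.IsUniform r) :
    Filter.Tendsto (fun n : ℕ => (exNum r n 𝓕 : ℝ) / (n.choose r : ℝ)) Filter.atTop
      (nhds (sSup {b : ℝ | ∃ H : FinHypergraph, H.IsUniform r ∧ H.HomFree 𝓕 ∧
        b = blowupDensity r H})) :=
  turan_density_eq_sup_blowupDensity_general r 𝓕 h𝓕
end
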